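/- Let U be a unitary operator on a complex Hilbert space G and V an isometry on a complex Hilbert space K. Let E be a closed subspace of G with U E = E such that the unitary operator U|_E is reductive (every closed subspace of E invariant under U|_E is also invariant under (U|_E)*). Let N be a closed subspace of K ⊕ G invariant under V ⊕ U such that N ∩ ({0} ⊕ E) ≠ {0}. Then the isometry (V ⊕ U)|_N is not a unilateral shift of any (finite or infinite) multiplicity; equivalently, ⋂_{m≥0} (V ⊕ U)^m N ≠ {0}. -/

import Mathlib

noncomputable section

open ContinuousLinearMap

/-- A bounded operator `V` is unitary: an isometry onto. -/
def IsUnitaryOp {K : Type} [NormedAddCommGroup K] [InnerProductSpace ℂ K]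
    (V : K →L[ℂ] K) : Prop :=
  (∀ x, ‖V x‖ = ‖x‖) ∧ Function.Surjective V

/-- The direct sum `V ⊕ U` of two operators, acting on the `ℓ²`-product `K ⊕ G`. -/
def prodOp {K G : Type} [NormedAddCommGroup K] [InnerProductSpace ℂ K]
    [NormedAddCommGroup G] [InnerProductSpace ℂ G]
    (V : K →L[ℂ] K) (U : G →L[ℂ] G) : WithLp 2 (K × G) →L[ℂ] WithLp 2 (K × G) :=
  (((WithLp.prodContinuousLinearEquiv (p := 2) (𝕜 := ℂ) (α := K) (β := G)).symm :
      (K × G) →L[ℂ] WithLp 2 (K × G))).comp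
    ((V.prodMap U).comp
      ((WithLp.prodContinuousLinearEquiv (p := 2) (𝕜 := ℂ) (α := K) (β := G) :
        WithLp 2 (K × G) →L[ℂ] K × G)))

/-- If `U` is unitary on `G`, `E` is a closed `U`-invariant subspace with `U E = E` on which `U`
is reductive, `V` is an isometry on `K`, and `N` is a closed `V ⊕ U`-invariant subspace of
`K ⊕ G` with `N ∩ ({0} ⊕ E) ≠ {0}`, then `(V ⊕ U)|_N` is not a unilateral shift:
`⋂_{m ≥ 0} (V ⊕ U)^m N ≠ {0}`. -/
theorem restriction_not_unilateral_shift
    {K G : Type} [NormedAddCommGroup K] [InnerProductSpace ℂ K] [CompleteSpace K]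
    [NormedAddCommGroup G] [InnerProductSpace ℂ G] [CompleteSpace G]
    (U : G →L[ℂ] G) (hU : IsUnitaryOp U)
    (V : K →L[ℂ] K) (hV : ∀ x, ‖V x‖ = ‖x‖)
    (E : Submodule ℂ G) (hEclosed : IsClosed (E : Set G))
    (hUE : Submodule.map (U : G →ₗ[ℂ] G) E = E)
    (hred : ∀ F : Submodule ℂ G, F ≤ E → IsClosed (F : Set G) → (∀ x ∈ F, U x ∈ F) →
      ∀ x ∈ F, ContinuousLinearMap.adjoint U x ∈ F)
    (N : Submodule ℂ (WithLp 2 (K × G))) (hNclosed : IsClosed (N : Set (WithLp 2 (K × G))))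
    (hNinv : ∀ y ∈ N, prodOp V U y ∈ N)
    (hNE : ∃ y ∈ N, y ≠ 0 ∧ (WithLp.equiv 2 (K × G) y).1 = 0 ∧
      (WithLp.equiv 2 (K × G) y).2 ∈ E) :
    ∃ y ∈ ⋂ m : ℕ, (⇑(prodOp V U ^ m)) '' (N : Set (WithLp 2 (K × G))), y ≠ 0 := by
  obtain ⟨y, hyN, hy0, hy1, hy2⟩ := hNE
  -- the embedding g ↦ (0, g)
  set L : G →L[ℂ] WithLp 2 (K × G) :=
    (((WithLp.prodContinuousLinearEquiv (p := 2) (𝕜 := ℂ) (α := K) (β := G)).symm :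
      (K × G) →L[ℂ] WithLp 2 (K × G))).comp (ContinuousLinearMap.inr ℂ K G) with hLdef
  have hLapply : ∀ g : G, L g = (WithLp.equiv 2 (K × G)).symm (0, g) := fun g => rfl
  have hkey : ∀ g : G, prodOp V U (L g) = L (U g) := by
    intro g
    show (WithLp.equiv 2 (K × G)).symm (V 0, U g) = (WithLp.equiv 2 (K × G)).symm (0, U g)
    rw [map_zero]
  -- y = L y₂
  have hyL : y = L ((WithLp.equiv 2 (K × G) y).2) := by
    have : (WithLp.equiv 2 (K × G)) y = (0, (WithLp.equiv 2 (K × G) y).2) :=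
      Prod.ext hy1 rfl
    calc y = (WithLp.equiv 2 (K × G)).symm ((WithLp.equiv 2 (K × G)) y) := rfl
    _ = _ := by rw [this]; rfl
  set e := (WithLp.equiv 2 (K × G) y).2 with he
  -- the subspace M₀
  set M₀ : Submodule ℂ G := E ⊓ Submodule.comap (L : G →ₗ[ℂ] WithLp 2 (K × G)) N with hM₀
  have hM₀closed : IsClosed (M₀ : Set G) := by
    have : (M₀ : Set G) = (E : Set G) ∩ (⇑L ⁻¹' (N : Set (WithLp 2 (K × G)))) := rfl
    rw [this]
    exact hEclosed.inter (hNclosed.preimage L.continuous)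
  have hUEmem : ∀ g ∈ E, U g ∈ E := by
    intro g hg
    rw [← hUE]
    exact Submodule.mem_map_of_mem hg
  have hM₀inv : ∀ g ∈ M₀, U g ∈ M₀ := by
    rintro g ⟨hg1, hg2⟩
    refine ⟨hUEmem g hg1, ?_⟩
    have : L (U g) ∈ N := by rw [← hkey]; exact hNinv _ hg2
    exact this
  have hM₀adj : ∀ g ∈ M₀, ContinuousLinearMap.adjoint U g ∈ M₀ :=
    hred M₀ inf_le_left hM₀closed hM₀inv
  -- unitarity: U ∘ U* = 1
  have hiso : ∀ x z : G, inner ℂ (U x) (U z) = (inner ℂ x z : ℂ) := by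
    intro x z
    exact (LinearIsometry.mk (U : G →ₗ[ℂ] G) hU.1).inner_map_map x z
  have hUstarU : ∀ g : G, ContinuousLinearMap.adjoint U (U g) = g := by
    intro g
    apply ext_inner_right ℂ
    intro z
    rw [ContinuousLinearMap.adjoint_inner_left]
    exact hiso g z
  have hUUstar : U * ContinuousLinearMap.adjoint U = 1 := by
    ext z
    obtain ⟨w, rfl⟩ := hU.2 z
    show U (ContinuousLinearMap.adjoint U (U w)) = U w
    rw [hUstarU]
  have hpowinv : ∀ m : ℕ, U ^ m * (ContinuousLinearMap.adjoint U) ^ m = 1 := by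
    intro m
    induction m with
    | zero => simp
    | succ n ih =>
      rw [pow_succ, pow_succ']
      calc U ^ n * U * (ContinuousLinearMap.adjoint U * (ContinuousLinearMap.adjoint U) ^ n)
          = U ^ n * (U * ContinuousLinearMap.adjoint U) * (ContinuousLinearMap.adjoint U) ^ n := by
            simp only [mul_assoc]
        _ = 1 := by rw [hUUstar, mul_one, ih]
  -- iterated key lemma
  have hkeypow : ∀ (m : ℕ) (g : G), (prodOp V U ^ m) (L g) = L ((U ^ m) g) := by
    intro m
    induction m with
    | zero => intro g; simp
    | succ n ih =>
      intro g
      rw [pow_succ, pow_succ']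
      rw [ContinuousLinearMap.mul_apply, hkey, ih]
      simp only [← ContinuousLinearMap.mul_apply, ← pow_succ, ← pow_succ']
  -- (U*)^m e ∈ M₀
  have heM₀ : e ∈ M₀ := ⟨hy2, by show L e ∈ N; rw [← hyL]; exact hyN⟩
  have hadjpow : ∀ m : ℕ, ((ContinuousLinearMap.adjoint U) ^ m) e ∈ M₀ := by
    intro m
    induction m with
    | zero => simpa using heM₀
    | succ n ih =>
      rw [pow_succ']
      exact hM₀adj _ ih
  refine ⟨y, ?_, hy0⟩
  refine Set.mem_iInter.2 fun m => ?_
  refine ⟨L (((ContinuousLinearMap.adjoint U) ^ m) e), (hadjpow m).2, ?_⟩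
  rw [hkeypow]
  rw [← ContinuousLinearMap.mul_apply, hpowinv, ContinuousLinearMap.one_apply, ← hyL]
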